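/- arXiv:2309.03974 — 2 statements merged into one kernel-verified Lean document; each statement's English description precedes it below -/
import Mathlib

section
/- Nonpositive pairwise covariances in DBsample: under the DBsample process with p ∈ (0,1) and 0 < α ≤ min((1-p)/p, p/(1-p)) (so each z_k has marginal Bernoulli(p)), Cov(z_k, z_ℓ) ≤ 0 for all k ≠ ℓ. -/
/-! Because `α * p ≤ 1 - p` and `α * (1 - p) ≤ p`, the clip in `dbq` is never active: the
parameter of draw `n` is `p (1 + α) - α p̂ₙ`, affine in the past draws. Conditioning on the past
therefore gives `E z_n = p` and, for `k < n`, `Cov(z_k, z_n) = -(α / n) Σ_{j<n} Cov(z_k, z_j)`.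
Induction on the number of draws carries two facts about the covariance matrix: its off-diagonal
entries are `≤ 0` and its row sums are `≥ 0`. Adding a draw multiplies each old row sum by
`1 - α / n ≥ 0`, creates off-diagonal entries `-(α / n)·(row sum) ≤ 0`, and gives the new row the
sum `p (1 - p) - (α / n) Σ_k (row sum k)`; since off-diagonal entries are `≤ 0`, each row sum is at
most its diagonal entry `p (1 - p)`, so the new row sum is `≥ (1 - α) p (1 - p) ≥ 0`. -/

open Finset

/-- Value in ℝ of a Bernoulli outcome. -/
noncomputable def b2r (b : Bool) : ℝ := if b then 1 else 0

/-- Empirical mean p̂ₖ of the first k samples (0-based: samples x₀, …, x_{k-1}). -/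
noncomputable def phat {n : ℕ} (x : Fin n → Bool) (k : ℕ) : ℝ :=
  (k : ℝ)⁻¹ * ∑ j : Fin n, if (j : ℕ) < k ∧ x j = true then (1 : ℝ) else 0

/-- Parameter used by DBsample at (0-based) step k:
q₀ = p and q_k = clip(p(1+α) - α·p̂ₖ, 0, 1) for k ≥ 1. -/
noncomputable def dbq {n : ℕ} (p α : ℝ) (x : Fin n → Bool) (k : ℕ) : ℝ :=
  if k = 0 then p else min 1 (max 0 (p * (1 + α) - α * phat x k))

/-- Joint density of the n DBsample draws. -/
noncomputable def dbDens {n : ℕ} (p α : ℝ) (x : Fin n → Bool) : ℝ :=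
  ∏ k : Fin n, (if x k then dbq p α x (k : ℕ) else 1 - dbq p α x (k : ℕ))

/-- Covariance of the k-th and ℓ-th DBsample draws. -/
noncomputable def dbCov {n : ℕ} (p α : ℝ) (k l : Fin n) : ℝ :=
  (∑ x : Fin n → Bool, dbDens p α x * (b2r (x k) * b2r (x l)))
    - (∑ x : Fin n → Bool, dbDens p α x * b2r (x k))
      * (∑ x : Fin n → Bool, dbDens p α x * b2r (x l))

noncomputable def dbExp {n : ℕ} (p α : ℝ) (f : (Fin n → Bool) → ℝ) : ℝ :=
  ∑ x, dbDens p α x * f x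

lemma b2r_nonneg (b : Bool) : 0 ≤ b2r b := by cases b <;> simp [b2r]

lemma b2r_le_one (b : Bool) : b2r b ≤ 1 := by cases b <;> simp [b2r]

lemma b2r_mul_self (b : Bool) : b2r b * b2r b = b2r b := by cases b <;> simp [b2r]

section Law

variable {n : ℕ} (p α : ℝ)

lemma phat_snoc (x : Fin n → Bool) (b : Bool) {k : ℕ} (hk : k ≤ n) :
    phat (Fin.snoc x b : Fin (n + 1) → Bool) k = phat x k := by
  have hlast : ¬ ((Fin.last n : ℕ) < k) := by simp only [Fin.val_last]; omega
  simp only [phat, Fin.sum_univ_castSucc, hlast, false_and, if_false, add_zero,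
    Fin.snoc_castSucc, Fin.val_castSucc]

lemma dbq_snoc (x : Fin n → Bool) (b : Bool) {k : ℕ} (hk : k ≤ n) :
    dbq p α (Fin.snoc x b : Fin (n + 1) → Bool) k = dbq p α x k := by
  simp only [dbq, phat_snoc x b hk]

lemma dbDens_snoc (x : Fin n → Bool) (b : Bool) :
    dbDens p α (Fin.snoc x b : Fin (n + 1) → Bool)
      = dbDens p α x * (if b then dbq p α x n else 1 - dbq p α x n) := by
  simp [dbDens, Fin.prod_univ_castSucc, dbq_snoc p α x b le_rfl,
    fun j : Fin n => dbq_snoc p α x b j.isLt.le]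

lemma dbExp_sub (f g : (Fin n → Bool) → ℝ) :
    dbExp p α (fun x => f x - g x) = dbExp p α f - dbExp p α g := by
  simp only [dbExp, mul_sub, sum_sub_distrib]

lemma dbExp_const_mul (c : ℝ) (f : (Fin n → Bool) → ℝ) :
    dbExp p α (fun x => c * f x) = c * dbExp p α f := by
  simp only [dbExp, mul_sum, mul_left_comm]

lemma dbExp_sum {ι : Type*} (s : Finset ι) (F : ι → (Fin n → Bool) → ℝ) :
    dbExp p α (fun x => ∑ i ∈ s, F i x) = ∑ i ∈ s, dbExp p α (F i) := by
  simp only [dbExp, mul_sum]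
  exact sum_comm

lemma dbExp_succ (f : (Fin (n + 1) → Bool) → ℝ) :
    dbExp p α f = dbExp p α (fun x => dbq p α x n * f (Fin.snoc x true)
      + (1 - dbq p α x n) * f (Fin.snoc x false)) := by
  rw [dbExp, ← (Fin.snocEquiv fun _ => Bool).sum_comp, Fintype.sum_prod_type_right]
  refine sum_congr rfl fun x _ => ?_
  have snocEquiv_eq (b : Bool) : Fin.snocEquiv (fun _ => Bool) (b, x) = Fin.snoc x b := rfl
  simp only [snocEquiv_eq, Fintype.sum_bool, dbDens_snoc, if_true, Bool.false_eq_true, if_false]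
  ring

lemma dbExp_comp_init (g : (Fin n → Bool) → ℝ) :
    dbExp p α (fun y : Fin (n + 1) → Bool => g (Fin.init y)) = dbExp p α g := by
  rw [dbExp_succ]
  simp only [Fin.init_snoc, ← add_mul, add_sub_cancel, one_mul]

lemma dbExp_mul_last (g : (Fin n → Bool) → ℝ) :
    dbExp p α (fun y : Fin (n + 1) → Bool => g (Fin.init y) * b2r (y (Fin.last n)))
      = dbExp p α (fun x => g x * dbq p α x n) := by
  rw [dbExp_succ]
  simp [Fin.init_snoc, Fin.snoc_last, b2r, mul_comm]

lemma dbExp_one : dbExp p α (fun _ : Fin n → Bool => 1) = 1 := by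
  induction n with
  | zero => simp [dbExp, dbDens]
  | succ n ih => exact (dbExp_comp_init p α fun _ => 1).trans ih

lemma phat_self (x : Fin n → Bool) : phat x n = (∑ j, b2r (x j)) / n := by
  rw [phat, div_eq_inv_mul]
  congr 1
  exact sum_congr rfl fun j _ => by simp [b2r, j.isLt]

lemma phat_self_mem_Icc (x : Fin n → Bool) : phat x n ∈ Set.Icc 0 1 := by
  have hsum_nonneg : 0 ≤ ∑ j, b2r (x j) := sum_nonneg fun j _ => b2r_nonneg _
  have hsum_le : ∑ j, b2r (x j) ≤ n := by
    simpa using sum_le_sum fun j (_ : j ∈ univ) => b2r_le_one (x j)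
  rw [phat_self]
  exact ⟨by positivity, div_le_one_of_le₀ hsum_le n.cast_nonneg⟩

end Law

section Covariance

variable {n : ℕ} {p α : ℝ}

lemma dbCov_eq (k l : Fin n) :
    dbCov p α k l = dbExp p α (fun x => b2r (x k) * b2r (x l))
      - dbExp p α (fun x => b2r (x k)) * dbExp p α (fun x => b2r (x l)) := rfl

lemma dbCov_comm (k l : Fin n) : dbCov p α k l = dbCov p α l k := by
  simp only [dbCov, mul_comm]

lemma dbCov_castSucc (k l : Fin n) : dbCov p α k.castSucc l.castSucc = dbCov p α k l := by
  rw [dbCov_eq, dbCov_eq, ← dbExp_comp_init p α fun x => b2r (x k) * b2r (x l),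
    ← dbExp_comp_init p α fun x => b2r (x k), ← dbExp_comp_init p α fun x => b2r (x l)]
  rfl

variable (hα0 : 0 ≤ α) (hαp : α * p ≤ 1 - p) (hαq : α * (1 - p) ≤ p)
include hα0 hαp hαq

lemma dbq_self (x : Fin n → Bool) (hn : 0 < n) :
    dbq p α x n = p * (1 + α) - α * phat x n := by
  obtain ⟨h0, h1⟩ := phat_self_mem_Icc x
  rw [dbq, if_neg hn.ne', max_eq_right (by nlinarith), min_eq_right (by nlinarith)]

lemma dbExp_mul_dbq (hn : 0 < n) (g : (Fin n → Bool) → ℝ) :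
    dbExp p α (fun x => g x * dbq p α x n)
      = p * (1 + α) * dbExp p α g - α / n * ∑ j, dbExp p α (fun x => g x * b2r (x j)) := by
  have hpt (x : Fin n → Bool) : g x * dbq p α x n
      = p * (1 + α) * g x - α / n * ∑ j, g x * b2r (x j) := by
    rw [dbq_self hα0 hαp hαq x hn, phat_self, ← mul_sum]
    ring
  simp only [hpt, dbExp_sub, dbExp_const_mul, dbExp_sum]

lemma dbExp_b2r (k : Fin n) : dbExp p α (fun x => b2r (x k)) = p := by
  induction n with
  | zero => exact k.elim0
  | succ n ih =>
    induction k using Fin.lastCases with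
    | cast k => exact (dbExp_comp_init p α fun x => b2r (x k)).trans (ih k)
    | last =>
      have hlast : dbExp p α (fun y : Fin (n + 1) → Bool => b2r (y (Fin.last n)))
          = dbExp p α (fun x : Fin n → Bool => dbq p α x n) := by
        simpa using dbExp_mul_last p α fun _ : Fin n → Bool => 1
      rw [hlast]
      rcases n.eq_zero_or_pos with rfl | hn
      · simp [dbExp, dbDens, dbq]
      · have h := dbExp_mul_dbq hα0 hαp hαq hn fun _ => 1
        simp only [one_mul, dbExp_one, ih, sum_const, card_univ, Fintype.card_fin,
          nsmul_eq_mul] at h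
        rw [h]
        field_simp
        ring

lemma dbCov_self (k : Fin n) : dbCov p α k k = p * (1 - p) := by
  simp only [dbCov_eq, b2r_mul_self, dbExp_b2r hα0 hαp hαq]
  ring

lemma dbCov_castSucc_last (k : Fin n) :
    dbCov p α k.castSucc (Fin.last n) = -(α / n) * ∑ j, dbCov p α k j := by
  have hn := k.pos
  have hcross : dbExp p α (fun y => b2r (y k.castSucc) * b2r (y (Fin.last n)))
      = p * (1 + α) * p - α / n * ∑ j, dbExp p α (fun x => b2r (x k) * b2r (x j)) := by
    refine (dbExp_mul_last p α fun x => b2r (x k)).trans ?_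
    rw [dbExp_mul_dbq hα0 hαp hαq hn, dbExp_b2r hα0 hαp hαq]
  simp only [dbCov_eq, hcross, dbExp_b2r hα0 hαp hαq, sum_sub_distrib, sum_const, card_univ,
    Fintype.card_fin, nsmul_eq_mul]
  field_simp
  ring

lemma sum_dbCov_castSucc (k : Fin n) :
    ∑ j, dbCov p α k.castSucc j = (1 - α / n) * ∑ j, dbCov p α k j := by
  rw [Fin.sum_univ_castSucc]
  simp only [dbCov_castSucc, dbCov_castSucc_last hα0 hαp hαq]
  ring

lemma sum_dbCov_last :
    ∑ j, dbCov p α (Fin.last n) j = p * (1 - p) - α / n * ∑ k : Fin n, ∑ j, dbCov p α k j := by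
  rw [Fin.sum_univ_castSucc, dbCov_self hα0 hαp hαq, mul_sum]
  simp only [dbCov_comm (Fin.last n) (Fin.castSucc _), dbCov_castSucc_last hα0 hαp hαq]
  simp only [neg_mul, sum_neg_distrib]
  ring

lemma sum_dbCov_le {k : Fin n} (hoff : ∀ j, j ≠ k → dbCov p α k j ≤ 0) :
    ∑ j, dbCov p α k j ≤ p * (1 - p) := by
  rw [← add_sum_erase _ _ (mem_univ k), dbCov_self hα0 hαp hαq]
  have := sum_nonpos (s := univ.erase k) fun j hj => hoff j (ne_of_mem_erase hj)
  linarith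

lemma dbCov_succ_nonpos (hsum : ∀ k : Fin n, 0 ≤ ∑ j, dbCov p α k j)
    (hoff : ∀ k l : Fin n, k ≠ l → dbCov p α k l ≤ 0) (k l : Fin (n + 1)) (hkl : k ≠ l) :
    dbCov p α k l ≤ 0 := by
  have hlast (k : Fin n) : dbCov p α k.castSucc (Fin.last n) ≤ 0 := by
    rw [dbCov_castSucc_last hα0 hαp hαq, neg_mul, neg_nonpos]
    exact mul_nonneg (by positivity) (hsum k)
  induction k using Fin.lastCases with
  | cast k =>
    induction l using Fin.lastCases with
    | cast l =>
      rw [dbCov_castSucc]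
      exact hoff k l (ne_of_apply_ne Fin.castSucc hkl)
    | last => exact hlast k
  | last =>
    induction l using Fin.lastCases with
    | cast l => exact dbCov_comm (Fin.last n) l.castSucc ▸ hlast l
    | last => exact absurd rfl hkl

lemma sum_dbCov_succ_nonneg (hsum : ∀ k : Fin n, 0 ≤ ∑ j, dbCov p α k j)
    (hoff : ∀ k l : Fin n, k ≠ l → dbCov p α k l ≤ 0) (k : Fin (n + 1)) :
    0 ≤ ∑ j, dbCov p α k j := by
  have hα1 : α ≤ 1 := by linarith
  induction k using Fin.lastCases with
  | cast k =>
    rw [sum_dbCov_castSucc hα0 hαp hαq]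
    have hcoef : α / n ≤ 1 :=
      div_le_one_of_le₀ (hα1.trans (by exact_mod_cast k.pos)) n.cast_nonneg
    exact mul_nonneg (sub_nonneg.mpr hcoef) (hsum k)
  | last =>
    have hvar : 0 ≤ p * (1 - p) := mul_nonneg (by nlinarith) (by nlinarith)
    have htotal : ∑ k : Fin n, ∑ j, dbCov p α k j ≤ n * (p * (1 - p)) := by
      simpa using sum_le_sum fun k (_ : k ∈ univ) =>
        sum_dbCov_le hα0 hαp hαq fun j hj => hoff k j hj.symm
    have hscaled : α / n * ∑ k : Fin n, ∑ j, dbCov p α k j ≤ α * (p * (1 - p)) :=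
      calc α / n * ∑ k : Fin n, ∑ j, dbCov p α k j ≤ α / n * (n * (p * (1 - p))) := by gcongr
        _ = α * (p * (1 - p)) * (n / n) := by ring
        _ ≤ α * (p * (1 - p)) := mul_le_of_le_one_right (by positivity) (div_self_le_one _)
    rw [sum_dbCov_last hα0 hαp hαq]
    nlinarith

theorem dbCov_nonpos_and_sum_dbCov_nonneg :
    (∀ k l : Fin n, k ≠ l → dbCov p α k l ≤ 0) ∧ ∀ k : Fin n, 0 ≤ ∑ j, dbCov p α k j := by
  induction n with
  | zero => exact ⟨fun k => k.elim0, fun k => k.elim0⟩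
  | succ n ih =>
    obtain ⟨hoff, hsum⟩ := ih
    exact ⟨dbCov_succ_nonpos hα0 hαp hαq hsum hoff,
      sum_dbCov_succ_nonneg hα0 hαp hαq hsum hoff⟩

end Covariance

/-- nonpositive pairwise covariances in DBsample:
Cov(z_k, z_ℓ) ≤ 0 for all k ≠ ℓ, when 0 < α ≤ min((1-p)/p, p/(1-p)). -/
theorem dbsample_nonpositive_covariances (p α : ℝ) (hp0 : 0 < p) (hp1 : p < 1)
    (hα0 : 0 < α) (hα : α ≤ min ((1 - p) / p) (p / (1 - p)))
    (n : ℕ) (k l : Fin n) (hkl : k ≠ l) :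
    dbCov p α k l ≤ 0 := by
  have hαp : α * p ≤ 1 - p := (le_div_iff₀ hp0).mp (hα.trans (min_le_left _ _))
  have hαq : α * (1 - p) ≤ p := (le_div_iff₀ (sub_pos.mpr hp1)).mp (hα.trans (min_le_right _ _))
  exact (dbCov_nonpos_and_sum_dbCov_nonneg hα0.le hαp hαq).1 k l hkl
end

section
/- Variance of DBsurf in the intermediate regime: let p ∈ (0,1), p ≠ 1/2, and min((1-p)/p, p/(1-p)) < α ≤ max((1-p)/p, p/(1-p)). With DBsample draws x_1 ~ Bernoulli(p), x_2 | x_1 ~ Bernoulli(clip(p(1+α) - α·x_1, 0, 1)), the quantity κ = P(x_1=1,x_2=0) + P(x_1=0,x_2=1) equals p(1-p)·(1 + α + 1/max(p, 1-p)), and the unbiased estimator g = (p(1-p)/κ)·(f(x_1)-f(x_2))·(x_1-x_2) has Var[g] = (f(1)-f(0))²·p·(1-p)·(max(p,1-p)/((1+α)·max(p,1-p) + 1) - p(1-p)). -/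
/-!
Both outcomes with `x₁ ≠ x₂` give `g` the same value `c = p(1-p)(f(1)-f(0))/κ`, and the diagonal
gives `0`, so `E[g] = κc = p(1-p)(f(1)-f(0))` and `E[g²] = κc²`, whence
`Var[g] = (p(1-p)(f(1)-f(0)))²(1/κ - 1)` for any law of `(x₁, x₂)`.

The substitution `(p, x₁, x₂) ↦ (1-p, ¬x₁, ¬x₂)` preserves the clipped DBsample law, `κ` and the
regime, so we may assume `p ≥ 1/2`. There `α ≥ (1-p)/p` clips `P(x₂ = 1 | x₁ = 0)` to `1`, while
`α ≤ p/(1-p)` leaves `P(x₂ = 1 | x₁ = 1) = p(1+α) - α` unclipped, giving `κ = p(1-p)(1+α) + (1-p)`.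
-/

open Finset

/-- The two-sample difference estimator g(x₁,x₂) = (p(1-p)/κ)·(f(x₁)-f(x₂))·(x₁-x₂). -/
noncomputable def gEst (p κ : ℝ) (f : ℝ → ℝ) (x : Bool × Bool) : ℝ :=
  p * (1 - p) / κ * (f (b2r x.1) - f (b2r x.2)) * (b2r x.1 - b2r x.2)

/-- Joint density of two DBsample draws with clipping:
x₁ ~ Bernoulli(p), x₂ | x₁ ~ Bernoulli(clip(p(1+α) - α·x₁, 0, 1)). -/
noncomputable def dbW2c (p α : ℝ) (x : Bool × Bool) : ℝ :=
  (if x.1 then p else 1 - p) *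
    (if x.2 then min 1 (max 0 (p * (1 + α) - α * b2r x.1))
      else 1 - min 1 (max 0 (p * (1 + α) - α * b2r x.1)))

section Estimator

variable (p κ : ℝ) (f : ℝ → ℝ)

lemma gEst_diag (b : Bool) : gEst p κ f (b, b) = 0 := by
  simp [gEst]

lemma gEst_true_false : gEst p κ f (true, false) = p * (1 - p) / κ * (f 1 - f 0) := by
  simp [gEst, b2r]

lemma gEst_false_true : gEst p κ f (false, true) = p * (1 - p) / κ * (f 1 - f 0) := by
  simp [gEst, b2r]
  ring

variable {p κ} (w : Bool × Bool → ℝ)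

lemma sum_mul_gEst (hκ : κ = w (true, false) + w (false, true)) (hκ0 : κ ≠ 0) :
    ∑ x, w x * gEst p κ f x = p * (1 - p) * (f 1 - f 0) := by
  simp only [Fintype.sum_prod_type, Fintype.sum_bool, gEst_diag, gEst_true_false,
    gEst_false_true]
  field_simp
  rw [hκ]
  ring

lemma sum_mul_gEst_sq (hκ : κ = w (true, false) + w (false, true)) :
    ∑ x, w x * gEst p κ f x ^ 2 = (p * (1 - p) * (f 1 - f 0)) ^ 2 / κ := by
  rcases eq_or_ne κ 0 with rfl | hκ0
  · simp [gEst]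
  simp only [Fintype.sum_prod_type, Fintype.sum_bool, gEst_diag, gEst_true_false,
    gEst_false_true]
  field_simp
  rw [hκ]
  ring

lemma clip_one_sub (t : ℝ) : min 1 (max 0 (1 - t)) = 1 - min 1 (max 0 t) := by
  simp only [min_def, max_def]
  split_ifs <;> linarith

lemma b2r_not (b : Bool) : b2r (!b) = 1 - b2r b := by
  cases b <;> simp [b2r]

lemma dbW2c_one_sub (p α : ℝ) (x : Bool × Bool) :
    dbW2c (1 - p) α (!x.1, !x.2) = dbW2c p α x := by
  have hlin : (1 - p) * (1 + α) - α * b2r (!x.1) = 1 - (p * (1 + α) - α * b2r x.1) := by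
    rw [b2r_not]; ring
  obtain ⟨x₁, x₂⟩ := x
  simp only [dbW2c, hlin, clip_one_sub]
  cases x₁ <;> cases x₂ <;> simp

noncomputable def dbKappa (p α : ℝ) : ℝ := dbW2c p α (true, false) + dbW2c p α (false, true)

lemma dbKappa_one_sub (p α : ℝ) : dbKappa (1 - p) α = dbKappa p α := by
  rw [dbKappa, dbKappa, add_comm, ← dbW2c_one_sub p α (true, false),
    ← dbW2c_one_sub p α (false, true)]
  rfl

lemma dbKappa_eq_of_mem_Icc {p α : ℝ} (hp0 : 0 < p) (hp1 : p < 1)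
    (hα : α ∈ Set.Icc ((1 - p) / p) (p / (1 - p))) :
    dbKappa p α = p * (1 - p) * (1 + α + 1 / p) := by
  obtain ⟨hα₁, hα₂⟩ := hα
  rw [div_le_iff₀ hp0] at hα₁
  rw [le_div_iff₀ (sub_pos.2 hp1)] at hα₂
  have hclip₁ : min 1 (max 0 (p * (1 + α) - α * b2r true)) = p * (1 + α) - α := by
    rw [b2r, if_pos rfl, max_eq_right (by nlinarith), min_eq_right (by nlinarith)]
    ring
  have hclip₀ : min 1 (max 0 (p * (1 + α) - α * b2r false)) = 1 := by
    rw [b2r, if_neg (by decide), max_eq_right (by nlinarith), min_eq_left (by nlinarith)]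
  simp only [dbKappa, dbW2c, hclip₀, hclip₁, if_true, if_false, Bool.false_eq_true]
  field_simp
  ring

lemma dbKappa_eq {p α : ℝ} (hp0 : 0 < p) (hp1 : p < 1)
    (hα₁ : min ((1 - p) / p) (p / (1 - p)) ≤ α) (hα₂ : α ≤ max ((1 - p) / p) (p / (1 - p))) :
    dbKappa p α = p * (1 - p) * (1 + α + 1 / max p (1 - p)) := by
  have hq0 : 0 < 1 - p := sub_pos.2 hp1
  rcases le_total (1 - p) p with h | h
  · have hle : (1 - p) / p ≤ p / (1 - p) := by
      rw [div_le_div_iff₀ hp0 hq0]; nlinarith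
    rw [min_eq_left hle] at hα₁
    rw [max_eq_right hle] at hα₂
    rw [max_eq_left h, dbKappa_eq_of_mem_Icc hp0 hp1 ⟨hα₁, hα₂⟩]
  · have hle : p / (1 - p) ≤ (1 - p) / p := by
      rw [div_le_div_iff₀ hq0 hp0]; nlinarith
    rw [min_eq_right hle] at hα₁
    rw [max_eq_left hle] at hα₂
    have hκ := dbKappa_eq_of_mem_Icc (p := 1 - p) hq0 (by linarith)
      ⟨by simpa using hα₁, by simpa using hα₂⟩
    rw [dbKappa_one_sub, sub_sub_cancel] at hκ
    rw [max_eq_right h, hκ]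
    ring

theorem dbsurf_variance_intermediate_regime_general (p α : ℝ) (hp0 : 0 < p) (hp1 : p < 1)
    (hα1 : min ((1 - p) / p) (p / (1 - p)) < α)
    (hα2 : α ≤ max ((1 - p) / p) (p / (1 - p))) (f : ℝ → ℝ)
    (κ : ℝ) (hκdef : κ = dbW2c p α (true, false) + dbW2c p α (false, true)) :
    κ = p * (1 - p) * (1 + α + 1 / max p (1 - p)) ∧
      (∑ x : Bool × Bool, dbW2c p α x * gEst p κ f x ^ 2)
          - (∑ x : Bool × Bool, dbW2c p α x * gEst p κ f x) ^ 2
        = (f 1 - f 0) ^ 2 * p * (1 - p)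
            * (max p (1 - p) / ((1 + α) * max p (1 - p) + 1) - p * (1 - p)) := by
  have hκ : κ = p * (1 - p) * (1 + α + 1 / max p (1 - p)) :=
    hκdef.trans (dbKappa_eq hp0 hp1 hα1.le hα2)
  have hα0 : 0 < α := lt_of_le_of_lt (by positivity) hα1
  have hκ0 : κ ≠ 0 := by rw [hκ]; positivity
  refine ⟨hκ, ?_⟩
  rw [sum_mul_gEst_sq f _ hκdef, sum_mul_gEst f _ hκdef hκ0, hκ]
  field_simp

/-- variance of DBsurf in the intermediate regime
min((1-p)/p, p/(1-p)) < α ≤ max((1-p)/p, p/(1-p)) (p ≠ 1/2):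
κ = P(1,0)+P(0,1) = p(1-p)·(1 + α + 1/max(p,1-p)) and
Var[g] = (f(1)-f(0))²·p·(1-p)·(max(p,1-p)/((1+α)·max(p,1-p) + 1) - p(1-p)). -/
theorem dbsurf_variance_intermediate_regime (p α : ℝ) (hp0 : 0 < p) (hp1 : p < 1)
    (hphalf : p ≠ 1 / 2)
    (hα1 : min ((1 - p) / p) (p / (1 - p)) < α)
    (hα2 : α ≤ max ((1 - p) / p) (p / (1 - p))) (f : ℝ → ℝ)
    (κ : ℝ) (hκdef : κ = dbW2c p α (true, false) + dbW2c p α (false, true)) :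
    κ = p * (1 - p) * (1 + α + 1 / max p (1 - p)) ∧
      (∑ x : Bool × Bool, dbW2c p α x * gEst p κ f x ^ 2)
          - (∑ x : Bool × Bool, dbW2c p α x * gEst p κ f x) ^ 2
        = (f 1 - f 0) ^ 2 * p * (1 - p)
            * (max p (1 - p) / ((1 + α) * max p (1 - p) + 1) - p * (1 - p)) :=
  dbsurf_variance_intermediate_regime_general p α hp0 hp1 hα1 hα2 f κ hκdef
end Estimator
end
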